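/- arXiv:1910.00308 — 5 statements merged into one kernel-verified Lean document; each statement's English description precedes it below -/
import Mathlib

section
/- Let 0 < p < 1 be a probability and let m : ℕ → ℕ be a function with positive values such that (−log_{1-p} m(n) − n)/log n → ∞ as n → ∞ (i.e. m(n) = 1/(1-p)^{n + ω(log n)}). Then for every n, E[|min(B_{n,m(n),p})|] ≥ 1, and E[|min(B_{n,m(n),p})|] → 1 as n → ∞. -/
open MeasureTheory

/-- The Bernoulli(p) measure on `Bool`. -/
noncomputable def bernoulliBool (p : ℝ) : Measure Bool :=
  ENNReal.ofReal p • Measure.dirac true + ENNReal.ofReal (1 - p) • Measure.dirac false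

instance (p : ℝ) : IsFiniteMeasure (bernoulliBool p) := by
  constructor
  rw [bernoulliBool]
  simp [ENNReal.add_lt_top]

/-- The law of `m` i.i.d. random subsets of `{1,…,n}` (encoded as indicator vectors),
each element included independently with probability `p`. -/
noncomputable def hyperMeasure (n m : ℕ) (p : ℝ) : Measure (Fin m → Fin n → Bool) :=
  Measure.pi fun _ : Fin m => Measure.pi fun _ : Fin n => bernoulliBool p

/-- The subset of `Fin n` encoded by an indicator vector. -/
def toSet {n : ℕ} (f : Fin n → Bool) : Finset (Fin n) :=
  Finset.univ.filter fun i => f i = true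

/-- The number of distinct minimal edges of the sampled multi-hypergraph:
sets `S` that occur among the samples and such that no sample is a proper subset of `S`. -/
def minCount (n m : ℕ) (ω : Fin m → Fin n → Bool) : ℕ :=
  (Finset.univ.filter fun S : Finset (Fin n) =>
    (∃ j, toSet (ω j) = S) ∧ ∀ k, ¬ toSet (ω k) ⊂ S).card

/-- Expected size of the minimization of `B_{n,m,p}`. -/
noncomputable def expMin (n m : ℕ) (p : ℝ) : ℝ :=
  ∫ ω, (minCount n m ω : ℝ) ∂(hyperMeasure n m p)

/-! Some sample `X_j` has minimum cardinality, so it is a minimal edge and `|min| ≥ 1`. If some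
sample is empty, `∅` is the only minimal edge and `|min| = 1`; otherwise `|min| ≤ 2 ^ n`. Hence
`1 ≤ E|min| ≤ 1 + 2 ^ n (1 - (1-p)^n)^m ≤ 1 + exp (n log 2 - m (1-p)^n)`, and the growth
hypothesis says exactly that `log (m (1-p)^n) = ω(log n)`, so `m (1-p)^n ≥ n ^ 2` eventually. -/

open Filter Real Topology

lemma one_le_minCount {n m : ℕ} (hm : 1 ≤ m) (ω : Fin m → Fin n → Bool) :
    1 ≤ minCount n m ω := by
  have : Nonempty (Fin m) := ⟨⟨0, hm⟩⟩
  obtain ⟨j, -, hj⟩ := Finset.exists_min_image Finset.univ (fun j => (toSet (ω j)).card)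
    Finset.univ_nonempty
  refine Finset.card_pos.2 ⟨toSet (ω j), Finset.mem_filter.2 ⟨Finset.mem_univ _, ⟨j, rfl⟩, ?_⟩⟩
  exact fun k hk => (Finset.card_lt_card hk).not_ge (hj k (Finset.mem_univ k))

lemma minCount_le_one_of_empty_mem {n m : ℕ} {ω : Fin m → Fin n → Bool} {j : Fin m}
    (hj : toSet (ω j) = ∅) : minCount n m ω ≤ 1 := by
  refine Finset.card_le_one.2 fun S hS T hT => ?_
  have eq_empty : ∀ U : Finset (Fin n), (∀ k, ¬ toSet (ω k) ⊂ U) → U = ∅ := fun U hU =>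
    Finset.not_nonempty_iff_eq_empty.1 fun hne => hU j (hj ▸ Finset.empty_ssubset.2 hne)
  rw [eq_empty S (Finset.mem_filter.1 hS).2.2, eq_empty T (Finset.mem_filter.1 hT).2.2]

lemma minCount_le_two_pow (n m : ℕ) (ω : Fin m → Fin n → Bool) : minCount n m ω ≤ 2 ^ n :=
  (Finset.card_filter_le _ _).trans_eq (by simp [Fintype.card_finset])

lemma isProbabilityMeasure_bernoulliBool {p : ℝ} (hp0 : 0 ≤ p) (hp1 : p ≤ 1) :
    IsProbabilityMeasure (bernoulliBool p) := by
  constructor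
  simp only [bernoulliBool, Measure.add_apply, Measure.smul_apply, measure_univ, smul_eq_mul,
    mul_one]
  rw [← ENNReal.ofReal_add hp0 (by linarith)]
  norm_num

lemma isProbabilityMeasure_hyperMeasure (n m : ℕ) {p : ℝ} (hp0 : 0 ≤ p) (hp1 : p ≤ 1) :
    IsProbabilityMeasure (hyperMeasure n m p) := by
  have := isProbabilityMeasure_bernoulliBool hp0 hp1
  rw [hyperMeasure]
  infer_instance

lemma bernoulliBool_real_false {p : ℝ} (hp1 : p ≤ 1) : (bernoulliBool p).real {false} = 1 - p := by
  simp [bernoulliBool, measureReal_def, sub_nonneg.2 hp1]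

lemma pi_bernoulliBool_real_const_false (n : ℕ) {p : ℝ} (hp1 : p ≤ 1) :
    (Measure.pi fun _ : Fin n => bernoulliBool p).real {fun _ => false} = (1 - p) ^ n := by
  rw [measureReal_def, Measure.pi_singleton, ENNReal.toReal_prod]
  simp [← measureReal_def, bernoulliBool_real_false hp1]

lemma hyperMeasure_real_no_empty_edge (n m : ℕ) {p : ℝ} (hp0 : 0 ≤ p) (hp1 : p ≤ 1) :
    (hyperMeasure n m p).real {ω | ∀ j, ω j ≠ fun _ => false} = (1 - (1 - p) ^ n) ^ m := by
  have := isProbabilityMeasure_bernoulliBool hp0 hp1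
  have hpi : {ω : Fin m → Fin n → Bool | ∀ j, ω j ≠ fun _ => false}
      = Set.univ.pi fun _ => {fun _ => false}ᶜ := by
    ext ω
    simp
  rw [measureReal_def, hyperMeasure, hpi, Measure.pi_pi, ENNReal.toReal_prod]
  simp [← measureReal_def, probReal_compl_eq_one_sub (MeasurableSet.of_discrete),
    pi_bernoulliBool_real_const_false n hp1]

lemma one_le_expMin {n m : ℕ} (hm : 1 ≤ m) {p : ℝ} (hp0 : 0 ≤ p) (hp1 : p ≤ 1) :
    1 ≤ expMin n m p := by
  have := isProbabilityMeasure_hyperMeasure n m hp0 hp1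
  calc (1 : ℝ) = ∫ _, (1 : ℝ) ∂hyperMeasure n m p := by simp
    _ ≤ expMin n m p := integral_mono (integrable_const 1) .of_finite fun ω =>
        Nat.one_le_cast.2 (one_le_minCount hm ω)

lemma expMin_le {n m : ℕ} {p : ℝ} (hp0 : 0 ≤ p) (hp1 : p ≤ 1) :
    expMin n m p ≤ 1 + 2 ^ n * (1 - (1 - p) ^ n) ^ m := by
  have := isProbabilityMeasure_hyperMeasure n m hp0 hp1
  set C : Set (Fin m → Fin n → Bool) := {ω | ∀ j, ω j ≠ fun _ => false} with hC
  have hbound : ∀ ω, (minCount n m ω : ℝ) ≤ 1 + C.indicator (fun _ => (2 : ℝ) ^ n) ω := by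
    intro ω
    by_cases hω : ω ∈ C
    · rw [Set.indicator_of_mem hω]
      have : (minCount n m ω : ℝ) ≤ 2 ^ n := by exact_mod_cast minCount_le_two_pow n m ω
      linarith
    · obtain ⟨j, hj⟩ : ∃ j, ω j = fun _ => false := by simpa [hC] using hω
      rw [Set.indicator_of_notMem hω, add_zero]
      exact_mod_cast minCount_le_one_of_empty_mem (j := j) (by simp [toSet, hj])
  calc expMin n m p ≤ ∫ ω, (1 + C.indicator (fun _ => (2 : ℝ) ^ n) ω) ∂hyperMeasure n m p :=
        integral_mono .of_finite .of_finite hbound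
    _ = 1 + 2 ^ n * (1 - (1 - p) ^ n) ^ m := by
        rw [integral_add (integrable_const 1) .of_finite, integral_const,
          integral_indicator_const _ .of_discrete, hyperMeasure_real_no_empty_edge n m hp0 hp1]
        simp [mul_comm]

lemma two_pow_mul_one_sub_pow_le_exp {x : ℝ} (hx1 : x ≤ 1) (n M : ℕ) :
    2 ^ n * (1 - x) ^ M ≤ exp (n * log 2 - M * x) := by
  calc 2 ^ n * (1 - x) ^ M ≤ exp (log 2) ^ n * exp (-x) ^ M := by
        rw [exp_log two_pos]
        gcongr
        exact one_sub_le_exp_neg x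
    _ = exp (n * log 2 - M * x) := by
        rw [← exp_nat_mul, ← exp_nat_mul, ← exp_add]
        ring_nf

lemma tendsto_two_pow_mul_one_sub_pow_zero {x : ℕ → ℝ} {M : ℕ → ℕ} (hx1 : ∀ n, x n ≤ 1)
    (hsq : ∀ᶠ n : ℕ in atTop, (n : ℝ) ^ 2 ≤ M n * x n) :
    Tendsto (fun n => 2 ^ n * (1 - x n) ^ M n) atTop (𝓝 0) := by
  have hexponent : ∀ᶠ n : ℕ in atTop, n * log 2 - M n * x n ≤ -n := by
    filter_upwards [hsq, eventually_ge_atTop 2] with n hn hn2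
    have : (2 : ℝ) ≤ n := by exact_mod_cast hn2
    nlinarith [log_two_lt_d9]
  have hbot : Tendsto (fun n : ℕ => n * log 2 - M n * x n) atTop atBot :=
    tendsto_atBot_mono' _ hexponent (tendsto_neg_atBot_iff.2 tendsto_natCast_atTop_atTop)
  refine squeeze_zero (fun n => ?_) (fun n => two_pow_mul_one_sub_pow_le_exp (hx1 n) n _)
    (tendsto_exp_atBot.comp hbot)
  have : 0 ≤ 1 - x n := sub_nonneg.2 (hx1 n)
  positivity

-- With `L = log q < 0`, the hypothesis says `log (m n * q ^ n) = -L * (-log_q (m n) - n)`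
-- eventually dominates `2 log n`.
lemma eventually_sq_le_mul_pow {q : ℝ} (hq0 : 0 < q) (hq1 : q < 1) {m : ℕ → ℕ}
    (hm : ∀ n, 1 ≤ m n)
    (hgrow : Tendsto (fun n : ℕ => (-(log (m n) / log q) - n) / log n) atTop atTop) :
    ∀ᶠ n : ℕ in atTop, (n : ℝ) ^ 2 ≤ m n * q ^ n := by
  have hL : 0 < -log q := neg_pos.2 (log_neg hq0 hq1)
  filter_upwards [hgrow.eventually_ge_atTop (2 / -log q), eventually_ge_atTop 2] with n hratio hn2
  have hn : (1 : ℝ) < n := by exact_mod_cast hn2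
  have hmn : (0 : ℝ) < m n := by exact_mod_cast hm n
  rw [le_div_iff₀ (log_pos hn), div_mul_eq_mul_div, div_le_iff₀ hL] at hratio
  rw [← log_le_log_iff (by positivity) (by positivity), log_pow, log_mul hmn.ne' (by positivity),
    log_pow]
  have : -(log (m n) / log q) * -log q = log (m n) := by
    field_simp [(log_neg hq0 hq1).ne]
  push_cast
  nlinarith

/-- **Collapse of the minimization.** If `m(n) = 1/(1-p)^{n+ω(log n)}`, i.e.
`(-log_{1-p} m(n) - n)/log n → ∞`, then `1 ≤ E[|min(B_{n,m(n),p})|]` for all `n` and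
`E[|min(B_{n,m(n),p})|] → 1`. -/
theorem minimization_collapse (p : ℝ) (hp0 : 0 < p) (hp1 : p < 1)
    (m : ℕ → ℕ) (hm : ∀ n, 1 ≤ m n)
    (hgrow : Filter.Tendsto
      (fun n : ℕ => (-(Real.log (m n) / Real.log (1 - p)) - n) / Real.log n)
      Filter.atTop Filter.atTop) :
    (∀ n : ℕ, 1 ≤ expMin n (m n) p) ∧
      Filter.Tendsto (fun n : ℕ => expMin n (m n) p) Filter.atTop (nhds 1) := by
  have hlower : ∀ n, 1 ≤ expMin n (m n) p := fun n => one_le_expMin (hm n) hp0.le hp1.le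
  have hq1 : ∀ n : ℕ, (1 - p) ^ n ≤ 1 := fun n => pow_le_one₀ (by linarith) (by linarith)
  have herror : Tendsto (fun n => 2 ^ n * (1 - (1 - p) ^ n) ^ m n) atTop (𝓝 0) :=
    tendsto_two_pow_mul_one_sub_pow_zero hq1
      (eventually_sq_le_mul_pow (by linarith) (by linarith) hm hgrow)
  refine ⟨hlower, tendsto_of_tendsto_of_tendsto_of_le_of_le tendsto_const_nhds ?_ hlower
    fun n => expMin_le hp0.le hp1.le⟩
  simpa using herror.const_add 1
end

section
/- Let n be a positive integer, x and p probabilities with 0 < x < p < 1 such that x·n is an integer, and let Y ~ Bin(n,p). Then 2^{-Dkl(x‖p)·n}/√(8·n·x·(1-x)) ≤ P[Y ≤ xn] ≤ (p·√(1-x))/((p-x)·√(π·x)) · 2^{-Dkl(x‖p)·n}/√n. -/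
/-- Binary Kullback–Leibler divergence between Bernoulli distributions
(`Real.logb 2 0 = 0`, so the convention `0·log 0 = 0` holds). -/
noncomputable def dkl (x p : ℝ) : ℝ :=
  x * Real.logb 2 (x / p) + (1 - x) * Real.logb 2 ((1 - x) / (1 - p))

/-- `P[Y ≤ t]` for a binomial random variable `Y ~ Bin(n,p)`. -/
noncomputable def binomPLE (n : ℕ) (p t : ℝ) : ℝ :=
  ∑ k ∈ Finset.range (n + 1),
    if (k : ℝ) ≤ t then (n.choose k : ℝ) * p ^ k * (1 - p) ^ (n - k) else 0

/-- `P[Y ≥ t]` for a binomial random variable `Y ~ Bin(n,p)`. -/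
noncomputable def binomPGE (n : ℕ) (p t : ℝ) : ℝ :=
  ∑ k ∈ Finset.range (n + 1),
    if t ≤ (k : ℝ) then (n.choose k : ℝ) * p ^ k * (1 - p) ^ (n - k) else 0

/-!
With `k = xn` and `m = n - k`, one has `2^{-Dkl(x‖p)n} = n^n / (k^k m^m) · p^k (1-p)^m`, so both
bounds compare `P[Y ≤ k]` with its last term `C(n,k) p^k (1-p)^m`, and `C(n,k)` with
`n^n / (k^k m^m)`. For the lower bound that term alone suffices, together with
`8 C(n,k)² k^{2k+1} m^{2m+1} ≥ n^{2n+1}`, proved by induction on `m` from the decrease of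
`(1 + 1/t)^{2t+1}` (equality holds at `k = m = 1`, so no Stirling-type estimate is sharp
enough). For the upper bound, the terms below `k` decrease geometrically with ratio
`k(1-p)/(mp) < 1`, so the tail is at most the last term times `mp/(np - k)`, while
`√(2πj) (j/e)^j ≤ j! ≤ e √j (j/e)^j` gives `C(n,k) ≤ n^n / (k^k m^m) / √(πkm/n)`.
-/

open Real Finset
open scoped Nat

lemma strictAntiOn_two_mul_add_one_mul_log_succ_sub_log :
    StrictAntiOn (fun t : ℝ => (2 * t + 1) * (log (t + 1) - log t)) (Set.Ioi 0) := by
  have hderiv (t : ℝ) (ht : 0 < t) :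
      HasDerivAt (fun t : ℝ => (2 * t + 1) * (log (t + 1) - log t))
        (2 * (log (t + 1) - log t) + (2 * t + 1) * ((t + 1)⁻¹ - t⁻¹)) t := by
    have hlog : HasDerivAt (fun s : ℝ => log (s + 1)) (t + 1)⁻¹ t := by
      simpa using ((hasDerivAt_id t).add_const 1).log (by positivity)
    have hlin : HasDerivAt (fun s : ℝ => 2 * s + 1) 2 t := by
      simpa using ((hasDerivAt_id t).const_mul 2).add_const 1
    exact hlin.mul (hlog.sub (hasDerivAt_log ht.ne'))
  refine strictAntiOn_of_deriv_neg (convex_Ioi 0)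
    (fun t ht => (hderiv t ht).continuousAt.continuousWithinAt) fun t ht => ?_
  rw [interior_Ioi] at ht
  have ht : (0 : ℝ) < t := ht
  rw [(hderiv t ht).deriv]
  -- with `y = (t + 1) / t`, this is `log y < sinh (log y) = (y - y⁻¹) / 2`
  have hy : 0 < log ((t + 1) / t) := log_pos (by rw [lt_div_iff₀ ht]; linarith)
  have hsinh := self_lt_sinh_iff.mpr hy
  rw [sinh_log (by positivity), log_div (by positivity) ht.ne'] at hsinh
  have : ((t + 1) / t - ((t + 1) / t)⁻¹) / 2 = -((2 * t + 1) * ((t + 1)⁻¹ - t⁻¹)) / 2 := by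
    field_simp; ring
  linarith

lemma one_add_inv_pow_le {a b : ℕ} (ha : 0 < a) (hab : a ≤ b) :
    (1 + (b : ℝ)⁻¹) ^ (2 * b + 1) ≤ (1 + (a : ℝ)⁻¹) ^ (2 * a + 1) := by
  have key (c : ℕ) (hc : 0 < c) : (1 + (c : ℝ)⁻¹) ^ (2 * c + 1) =
      exp ((2 * c + 1) * (log (c + 1) - log c)) := by
    have hc : (0 : ℝ) < c := by exact_mod_cast hc
    have h : ((2 * c + 1 : ℕ) : ℝ) = 2 * c + 1 := by push_cast; ring
    rw [← log_div (by positivity) hc.ne', ← h, ← log_pow, exp_log (by positivity)]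
    field_simp
  rw [key a ha, key b (ha.trans_le hab), exp_le_exp]
  exact strictAntiOn_two_mul_add_one_mul_log_succ_sub_log.antitoneOn
    (Set.mem_Ioi.2 (by exact_mod_cast ha)) (Set.mem_Ioi.2 (by exact_mod_cast ha.trans_le hab))
    (by exact_mod_cast hab)

lemma one_add_inv_pow_mul_pow {a : ℕ} (ha : 0 < a) :
    (1 + (a : ℝ)⁻¹) ^ (2 * a + 1) * (a : ℝ) ^ (2 * a + 1) =
      ((a : ℝ) + 1) ^ (2 * a + 1) := by
  have ha : (a : ℝ) ≠ 0 := by positivity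
  rw [← mul_pow]
  field_simp

lemma pow_le_eight_mul_choose_sq {k m : ℕ} (hk : 0 < k) (hm : 0 < m) :
    ((k + m : ℕ) : ℝ) ^ (2 * (k + m) + 1) ≤
      8 * ((k + m).choose k : ℝ) ^ 2 * (k : ℝ) ^ (2 * k + 1) * (m : ℝ) ^ (2 * m + 1) := by
  induction m, hm using Nat.le_induction with
  | base =>
    have hu : (1 + (k : ℝ)⁻¹) ^ (2 * k + 1) ≤ 8 := by
      simpa using (one_add_inv_pow_le one_pos hk).trans_eq (by norm_num)
    calc ((k + 1 : ℕ) : ℝ) ^ (2 * (k + 1) + 1)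
        = (1 + (k : ℝ)⁻¹) ^ (2 * k + 1) * (k : ℝ) ^ (2 * k + 1) * ((k : ℝ) + 1) ^ 2 := by
          rw [one_add_inv_pow_mul_pow hk]; push_cast; ring
      _ ≤ 8 * (k : ℝ) ^ (2 * k + 1) * ((k : ℝ) + 1) ^ 2 := by gcongr
      _ = _ := by rw [Nat.choose_succ_self_right]; push_cast; ring
  | succ m hm ih =>
    set N := k + m
    have hchoose : ((N + 1).choose k : ℝ) * (m + 1) = (N.choose k : ℝ) * (N + 1) := by
      have h := Nat.choose_mul_succ_eq N k
      rw [show N + 1 - k = m + 1 by omega] at h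
      exact_mod_cast h.symm
    have hu := one_add_inv_pow_le hm (show m ≤ N by omega)
    rw [show k + (m + 1) = N + 1 by omega]
    calc ((N + 1 : ℕ) : ℝ) ^ (2 * (N + 1) + 1)
        = (1 + (N : ℝ)⁻¹) ^ (2 * N + 1) * (N : ℝ) ^ (2 * N + 1) * ((N : ℝ) + 1) ^ 2 := by
          rw [one_add_inv_pow_mul_pow (by omega)]; push_cast; ring
      _ ≤ (1 + (m : ℝ)⁻¹) ^ (2 * m + 1) *
          (8 * (N.choose k : ℝ) ^ 2 * (k : ℝ) ^ (2 * k + 1) * (m : ℝ) ^ (2 * m + 1)) *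
          ((N : ℝ) + 1) ^ 2 := by gcongr
      _ = 8 * ((N.choose k : ℝ) * (N + 1)) ^ 2 * (k : ℝ) ^ (2 * k + 1) *
          ((1 + (m : ℝ)⁻¹) ^ (2 * m + 1) * (m : ℝ) ^ (2 * m + 1)) := by ring
      _ = _ := by
          rw [one_add_inv_pow_mul_pow hm, ← hchoose]
          push_cast; ring

lemma pow_div_pow_mul_pow_div_sqrt_le_choose {k m : ℕ} (hk : 0 < k) (hm : 0 < m) :
    ((k + m : ℕ) : ℝ) ^ (k + m) / ((k : ℝ) ^ k * (m : ℝ) ^ m) / √(8 * k * m / (k + m)) ≤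
      (k + m).choose k := by
  have hk' : (0 : ℝ) < k := by exact_mod_cast hk
  have hm' : (0 : ℝ) < m := by exact_mod_cast hm
  rw [div_le_iff₀ (by positivity), ← pow_le_pow_iff_left₀ (by positivity) (by positivity)
    two_ne_zero, mul_pow, sq_sqrt (by positivity), div_pow, div_le_iff₀ (by positivity)]
  have := pow_le_eight_mul_choose_sq hk hm
  push_cast at this ⊢
  calc (((k : ℝ) + m) ^ (k + m)) ^ 2 = ((k : ℝ) + m) ^ (2 * (k + m) + 1) / (k + m) := by
        field_simp; ring
    _ ≤ 8 * ((k + m).choose k : ℝ) ^ 2 * (k : ℝ) ^ (2 * k + 1) * (m : ℝ) ^ (2 * m + 1) /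
          (k + m) := by gcongr
    _ = ((k + m).choose k : ℝ) ^ 2 * (8 * k * m / (k + m)) *
          ((k : ℝ) ^ k * (m : ℝ) ^ m) ^ 2 := by field_simp; ring

lemma factorial_le_exp_one_mul_sqrt_mul_pow {n : ℕ} (hn : n ≠ 0) :
    (n ! : ℝ) ≤ exp 1 * √n * (n / exp 1) ^ n := by
  obtain ⟨n, rfl⟩ := Nat.exists_eq_succ_of_ne_zero hn
  have hseq : Stirling.stirlingSeq (n + 1) ≤ exp 1 / √2 :=
    Stirling.stirlingSeq_one ▸ Stirling.stirlingSeq'_antitone (Nat.zero_le n)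
  rw [Stirling.stirlingSeq, div_le_div_iff₀ (by positivity) (by positivity)] at hseq
  calc ((n + 1) ! : ℝ) = (n + 1) ! * √2 / √2 := by field_simp
    _ ≤ exp 1 * (√(2 * (n + 1 : ℕ)) * ((n + 1 : ℕ) / exp 1) ^ (n + 1)) / √2 := by gcongr
    _ = _ := by rw [sqrt_mul zero_le_two]; field_simp

lemma choose_le_pow_div_pow_mul_pow_div_sqrt {k m : ℕ} (hk : 0 < k) (hm : 0 < m) :
    ((k + m).choose k : ℝ) ≤
      ((k + m : ℕ) : ℝ) ^ (k + m) / ((k : ℝ) ^ k * (m : ℝ) ^ m) /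
        √(π * k * m / (k + m)) := by
  have hk' : (0 : ℝ) < k := by exact_mod_cast hk
  have hm' : (0 : ℝ) < m := by exact_mod_cast hm
  have hchoose : ((k + m).choose k : ℝ) = (k + m) ! / (k ! * m !) := by
    have h := Nat.add_choose_mul_factorial_mul_factorial k m
    rw [← Nat.choose_symm_add] at h
    rw [eq_div_iff (by positivity), ← mul_assoc]
    exact_mod_cast h
  -- `e ≤ 2 √π` absorbs the constant of the crude upper Stirling bound
  have he : exp 1 / (2 * √π) ≤ 1 := by
    rw [div_le_one (by positivity), ← sqrt_sq (exp_pos 1).le, show (2 : ℝ) = √4 by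
      rw [show (4 : ℝ) = 2 ^ 2 by norm_num, sqrt_sq zero_le_two], ← sqrt_mul (by norm_num)]
    exact sqrt_le_sqrt (by nlinarith [exp_one_lt_d9, pi_gt_three, exp_pos 1])
  calc ((k + m).choose k : ℝ)
      ≤ exp 1 * √(k + m : ℕ) * ((k + m : ℕ) / exp 1) ^ (k + m) /
          (√(2 * π * k) * (k / exp 1) ^ k * (√(2 * π * m) * (m / exp 1) ^ m)) := by
        rw [hchoose]
        gcongr
        · exact factorial_le_exp_one_mul_sqrt_mul_pow (by omega)
        · exact Stirling.le_factorial_stirling k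
        · exact Stirling.le_factorial_stirling m
    _ = exp 1 / (2 * √π) * (((k + m : ℕ) : ℝ) ^ (k + m) / ((k : ℝ) ^ k * (m : ℝ) ^ m) /
          √(π * k * m / (k + m))) := by
        push_cast
        rw [sqrt_div' _ (by positivity), sqrt_mul (by positivity), sqrt_mul (by positivity),
          sqrt_mul (by positivity), sqrt_mul (by positivity), sqrt_mul (by positivity), div_pow,
          div_pow, div_pow, pow_add (exp 1)]
        field_simp
        rw [sq_sqrt zero_le_two, mul_comm (k : ℝ), sqrt_mul pi_pos.le]
        ring
    _ ≤ _ := mul_le_of_le_one_left (by positivity) he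

lemma two_rpow_neg_dkl_mul {k m : ℕ} (hk : 0 < k) (hm : 0 < m) {p : ℝ} (hp0 : 0 < p)
    (hp1 : p < 1) :
    (2 : ℝ) ^ (-dkl (k / (k + m : ℕ)) p * (k + m : ℕ)) =
      ((k + m : ℕ) : ℝ) ^ (k + m) / ((k : ℝ) ^ k * (m : ℝ) ^ m) *
        (p ^ k * (1 - p) ^ m) := by
  have hk' : (0 : ℝ) < k := by exact_mod_cast hk
  have hm' : (0 : ℝ) < m := by exact_mod_cast hm
  have hq : 0 < 1 - p := by linarith
  have hn : (k : ℝ) + m ≠ 0 := by positivity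
  have h1x : 1 - k / ((k : ℝ) + m) = m / (k + m) := by field_simp; ring
  push_cast
  rw [rpow_def_of_pos two_pos, ← exp_log (by positivity : 0 < ((k : ℝ) + m) ^ (k + m) /
    ((k : ℝ) ^ k * (m : ℝ) ^ m) * (p ^ k * (1 - p) ^ m))]
  congr 1
  simp only [dkl, h1x, logb]
  simp [log_div, log_mul, log_pow, hk'.ne', hm'.ne', hp0.ne', hq.ne', hn]
  field_simp
  ring

lemma sum_range_succ_le_div_one_sub {f : ℕ → ℝ} {r : ℝ} {k : ℕ} (hr0 : 0 ≤ r)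
    (hr1 : r < 1) (hf0 : 0 ≤ f 0) (hf : ∀ i < k, f i ≤ r * f (i + 1)) :
    ∑ i ∈ range (k + 1), f i ≤ f k / (1 - r) := by
  induction k with
  | zero => simpa using div_le_div_of_nonneg_left hf0 (by linarith) (by linarith : 1 - r ≤ 1)
  | succ k ih =>
    rw [sum_range_succ, le_div_iff₀ (by linarith)]
    have := ih fun i hi => hf i (by omega)
    rw [le_div_iff₀ (by linarith)] at this
    nlinarith [hf k (by omega)]

noncomputable def binomTerm (n : ℕ) (p : ℝ) (i : ℕ) : ℝ :=
  n.choose i * p ^ i * (1 - p) ^ (n - i)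

section binomTerm

variable {n : ℕ} {p : ℝ}

lemma binomTerm_nonneg (hp0 : 0 ≤ p) (hp1 : p ≤ 1) (i : ℕ) : 0 ≤ binomTerm n p i := by
  unfold binomTerm
  have : 0 ≤ 1 - p := by linarith
  positivity

lemma binomPLE_natCast {k : ℕ} (hk : k ≤ n) :
    binomPLE n p k = ∑ i ∈ range (k + 1), binomTerm n p i := by
  rw [binomPLE, ← sum_filter]
  refine sum_congr ?_ fun _ _ => rfl
  ext i
  simp only [mem_filter, mem_range, Nat.cast_le]
  omega

lemma binomTerm_le_binomPLE_natCast {k : ℕ} (hk : k ≤ n) (hp0 : 0 ≤ p) (hp1 : p ≤ 1) :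
    binomTerm n p k ≤ binomPLE n p k := by
  rw [binomPLE_natCast hk]
  exact single_le_sum (fun i _ => binomTerm_nonneg hp0 hp1 i) (self_mem_range_succ k)

lemma binomTerm_mul_eq {i : ℕ} (hi : i < n) :
    binomTerm n p i * ((n - i) * p) = binomTerm n p (i + 1) * ((i + 1) * (1 - p)) := by
  have hchoose : (n.choose (i + 1) : ℝ) * (i + 1) = n.choose i * ((n - i : ℕ) : ℝ) := by
    exact_mod_cast Nat.choose_succ_right_eq n i
  have hpow : (1 - p) ^ (n - i) = (1 - p) ^ (n - (i + 1)) * (1 - p) := by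
    rw [← pow_succ, show n - (i + 1) + 1 = n - i by omega]
  rw [binomTerm, binomTerm, hpow, ← Nat.cast_sub hi.le]
  linear_combination (p ^ (i + 1) * (1 - p) ^ (n - (i + 1)) * (1 - p)) * hchoose.symm

lemma binomTerm_le_mul_succ {i k : ℕ} (hik : i < k) (hkn : k < n) (hp0 : 0 < p) (hp1 : p ≤ 1) :
    binomTerm n p i ≤ k * (1 - p) / ((n - k) * p) * binomTerm n p (i + 1) := by
  have hnk : (0 : ℝ) < n - k := by rw [sub_pos]; exact_mod_cast hkn
  have hik' : (i : ℝ) + 1 ≤ k := by exact_mod_cast hik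
  have hin : (n : ℝ) - k ≤ n - i := by
    have : (i : ℝ) ≤ k := by linarith
    linarith
  have heq := binomTerm_mul_eq (p := p) (hik.trans hkn)
  have hb := binomTerm_nonneg hp0.le hp1 (n := n) (i + 1)
  rw [div_mul_eq_mul_div, le_div_iff₀ (by positivity)]
  calc binomTerm n p i * ((n - k) * p) ≤ binomTerm n p i * ((n - i) * p) := by
        gcongr; exact binomTerm_nonneg hp0.le hp1 i
    _ = binomTerm n p (i + 1) * ((i + 1) * (1 - p)) := heq
    _ ≤ k * (1 - p) * binomTerm n p (i + 1) := by
        rw [mul_comm]; gcongr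

lemma binomPLE_natCast_le {k : ℕ} (hk : (k : ℝ) < n * p) (hp1 : p ≤ 1) :
    binomPLE n p k ≤ binomTerm n p k * ((n - k) * p / (n * p - k)) := by
  have hp0 : 0 < p := by
    by_contra! h
    nlinarith [(Nat.cast_nonneg k : (0 : ℝ) ≤ k), (Nat.cast_nonneg n : (0 : ℝ) ≤ n)]
  have hkn' : (k : ℝ) < n := hk.trans_le (by nlinarith [(Nat.cast_nonneg n : (0 : ℝ) ≤ n)])
  have hkn : k < n := by exact_mod_cast hkn'
  have hnk : (0 : ℝ) < n - k := by linarith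
  have hr1 : k * (1 - p) / ((n - k) * p) < 1 := by
    rw [div_lt_one (by positivity)]; linarith
  rw [binomPLE_natCast hkn.le]
  refine (sum_range_succ_le_div_one_sub (by positivity) hr1 (binomTerm_nonneg hp0.le hp1 0)
    fun i hi => binomTerm_le_mul_succ hi hkn hp0 hp1).trans_eq ?_
  rw [one_sub_div (mul_pos hnk hp0).ne', div_div_eq_mul_div]
  ring

end binomTerm

lemma exists_add_eq_of_natCast_eq_mul {n k : ℕ} {x : ℝ} (hn : 0 < n) (hx0 : 0 < x) (hx1 : x < 1)
    (hk : (k : ℝ) = x * n) : 0 < k ∧ ∃ m, 0 < m ∧ k + m = n ∧ x = k / (k + m : ℕ) := by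
  have hn' : (0 : ℝ) < n := by exact_mod_cast hn
  have hk0 : 0 < k := by exact_mod_cast (show (0 : ℝ) < k by rw [hk]; positivity)
  have hkn : k < n := by exact_mod_cast (show (k : ℝ) < n by rw [hk]; nlinarith)
  refine ⟨hk0, n - k, by omega, by omega, ?_⟩
  rw [Nat.add_sub_cancel' (by omega), hk]
  field_simp

section

variable {n k : ℕ} {x p : ℝ}

lemma two_rpow_neg_dkl_mul_div_sqrt_le_binomTerm (hn : 0 < n) (hx0 : 0 < x) (hx1 : x < 1)
    (hp0 : 0 < p) (hp1 : p < 1) (hk : (k : ℝ) = x * n) :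
    2 ^ (-dkl x p * n) / √(8 * n * x * (1 - x)) ≤ binomTerm n p k := by
  obtain ⟨hk0, m, hm0, rfl, rfl⟩ := exists_add_eq_of_natCast_eq_mul hn hx0 hx1 hk
  rw [two_rpow_neg_dkl_mul hk0 hm0 hp0 hp1, binomTerm, Nat.add_sub_cancel_left]
  have hkm : 8 * ((k + m : ℕ) : ℝ) * (k / (k + m : ℕ)) * (1 - k / (k + m : ℕ)) =
      8 * k * m / (k + m) := by
    push_cast; field_simp; ring
  calc _ = ((k + m : ℕ) : ℝ) ^ (k + m) / ((k : ℝ) ^ k * (m : ℝ) ^ m) /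
        √(8 * k * m / (k + m)) * (p ^ k * (1 - p) ^ m) := by rw [hkm]; ring
    _ ≤ (k + m).choose k * (p ^ k * (1 - p) ^ m) := by
        gcongr; exact pow_div_pow_mul_pow_div_sqrt_le_choose hk0 hm0
    _ = _ := by ring

lemma binomTerm_le_two_rpow_neg_dkl_mul_div_sqrt (hn : 0 < n) (hx0 : 0 < x) (hx1 : x < 1)
    (hp0 : 0 < p) (hp1 : p < 1) (hk : (k : ℝ) = x * n) :
    binomTerm n p k ≤ 2 ^ (-dkl x p * n) / √(π * n * x * (1 - x)) := by
  obtain ⟨hk0, m, hm0, rfl, rfl⟩ := exists_add_eq_of_natCast_eq_mul hn hx0 hx1 hk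
  rw [two_rpow_neg_dkl_mul hk0 hm0 hp0 hp1, binomTerm, Nat.add_sub_cancel_left]
  have hkm : π * ((k + m : ℕ) : ℝ) * (k / (k + m : ℕ)) * (1 - k / (k + m : ℕ)) =
      π * k * m / (k + m) := by
    push_cast; field_simp; ring
  calc ((k + m).choose k : ℝ) * p ^ k * (1 - p) ^ m
      = (k + m).choose k * (p ^ k * (1 - p) ^ m) := by ring
    _ ≤ ((k + m : ℕ) : ℝ) ^ (k + m) / ((k : ℝ) ^ k * (m : ℝ) ^ m) /
        √(π * k * m / (k + m)) * (p ^ k * (1 - p) ^ m) := by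
        gcongr; exact choose_le_pow_div_pow_mul_pow_div_sqrt hk0 hm0
    _ = _ := by rw [hkm]; ring

end

/-- **Tight Chernoff–Hoeffding, lower tail, integral case.** For `0 < x < p < 1` with
`xn` an integer, `2^{-Dkl(x‖p)n}/√(8nx(1-x)) ≤ P[Y ≤ xn] ≤
(p√(1-x))/((p-x)√(πx)) · 2^{-Dkl(x‖p)n}/√n`. -/
theorem chernoff_hoeffding_le_integral (n : ℕ) (hn : 0 < n) (x p : ℝ)
    (hx0 : 0 < x) (hxp : x < p) (hp1 : p < 1) (hint : ∃ k : ℕ, (k : ℝ) = x * n) :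
    (2 : ℝ) ^ (-(dkl x p) * n) / Real.sqrt (8 * n * x * (1 - x)) ≤ binomPLE n p (x * n) ∧
    binomPLE n p (x * n) ≤
      p * Real.sqrt (1 - x) / ((p - x) * Real.sqrt (Real.pi * x)) *
        ((2 : ℝ) ^ (-(dkl x p) * n) / Real.sqrt n) := by
  obtain ⟨k, hk⟩ := hint
  have hp0 : 0 < p := hx0.trans hxp
  have hx1 : x < 1 := hxp.trans hp1
  have hn' : (0 : ℝ) < n := by exact_mod_cast hn
  have hkn : k ≤ n := by exact_mod_cast (show (k : ℝ) ≤ n by rw [hk]; nlinarith)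
  rw [← hk]
  refine ⟨(two_rpow_neg_dkl_mul_div_sqrt_le_binomTerm hn hx0 hx1 hp0 hp1 hk).trans
    (binomTerm_le_binomPLE_natCast hkn hp0.le hp1.le), ?_⟩
  calc binomPLE n p k ≤ binomTerm n p k * ((n - k) * p / (n * p - k)) :=
        binomPLE_natCast_le (by rw [hk]; nlinarith) hp1.le
    _ ≤ 2 ^ (-dkl x p * n) / √(π * n * x * (1 - x)) * ((n - k) * p / (n * p - k)) := by
        gcongr
        · rw [hk]; exact div_nonneg (by nlinarith) (by nlinarith)
        · exact binomTerm_le_two_rpow_neg_dkl_mul_div_sqrt hn hx0 hx1 hp0 hp1 hk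
    _ = _ := by
        have hsq : √(1 - x) ^ 2 = 1 - x := sq_sqrt (by linarith)
        have hpx : p - x ≠ 0 := by linarith
        rw [hk, sqrt_mul (by positivity), sqrt_mul (by positivity), sqrt_mul (by positivity)]
        field_simp
        rw [sqrt_mul hx0.le, div_eq_iff (sqrt_pos.2 (by linarith)).ne']
        linear_combination (-(√x * √π)) * hsq
end

section
/- Let n be a positive integer, x and p probabilities with 0 < p < 1, 1/n ≤ x ≤ 1 - 1/n, and x ≤ p, let C > 0 be a positive real, and let x' be the unique rational with x'·n = ⌊x·n⌋. Then (x·(1-p)/e) · 2^{-Dkl(x‖p)·n}/√(C·n·x·(1-x)) < 2^{-Dkl(x'‖p)·n}/√(C·n·x'·(1-x')) < (1/p) · 2^{-Dkl(x‖p)·n}/√(C·n·x·(1-x)). -/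
/-!
Write `F t = 2 ^ (-Dkl(t‖p) n) / √(C n t (1 - t))`. In natural logarithms
`log F t = L t - log (C n) / 2`, where
`L t = n (H t + t log p + (1 - t) log (1 - p)) - (log t + log (1 - t)) / 2` and `H` is the binary
entropy, so both bounds are bounds on `L x' - L x`. Put `s = (x - x') n ∈ [0, 1)`. The tangent
lines of the concave `H` at `x'` and at `x` bound `n (H x' - H x)` by `s` times a slope, and
`log b - log a ≤ (b - a) / a` bounds the two square-root corrections by `s / (x' n) ≤ 1` and
`s / ((1 - x) n) ≤ 1`. For the upper bound these corrections must be absorbed by `s n log x`;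
with `u = x' n ≥ 1` and `w = (1 - x') n ≥ 1` this comes down to `w² - u² ≤ 2 u w (w - 1)`.
-/

open Real

lemma log_sub_log_le_div {a b : ℝ} (ha : 0 < a) (hb : 0 < b) : log b - log a ≤ (b - a) / a := by
  rw [← log_div hb.ne' ha.ne', sub_div, div_self ha.ne']
  exact log_le_sub_one_of_pos (div_pos hb ha)

lemma binEntropy_le_tangent {a b : ℝ} (ha₀ : 0 < a) (ha₁ : a < 1) (hb₀ : 0 < b) (hb₁ : b < 1) :
    binEntropy b ≤ binEntropy a + (b - a) * (log (1 - a) - log a) := by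
  have h₀ := mul_le_mul_of_nonneg_left (log_sub_log_le_div hb₀ ha₀) hb₀.le
  have h₁ := mul_le_mul_of_nonneg_left
    (log_sub_log_le_div (sub_pos.2 hb₁) (sub_pos.2 ha₁)) (sub_pos.2 hb₁).le
  rw [mul_div_cancel₀ _ hb₀.ne'] at h₀
  rw [mul_div_cancel₀ _ (sub_pos.2 hb₁).ne'] at h₁
  simp only [binEntropy, log_inv]
  linarith

noncomputable def logBinomialApprox (n p t : ℝ) : ℝ :=
  n * (binEntropy t + t * log p + (1 - t) * log (1 - p)) - (log t + log (1 - t)) / 2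

lemma two_rpow_neg_dkl_div_sqrt {n p t C : ℝ} (hn : 0 < n) (hp₀ : 0 < p) (hp₁ : p < 1)
    (ht₀ : 0 < t) (ht₁ : t < 1) (hC : 0 < C) :
    (2 : ℝ) ^ (-(dkl t p) * n) / √(C * n * t * (1 - t))
      = exp (logBinomialApprox n p t - log (C * n) / 2) := by
  have h1t : 0 < 1 - t := sub_pos.2 ht₁
  have hsqrt : √(C * n * t * (1 - t)) = exp (log (C * n * t * (1 - t)) / 2) := by
    rw [← log_sqrt (by positivity), exp_log (by positivity)]
  rw [rpow_def_of_pos two_pos, hsqrt, ← exp_sub, log_mul (by positivity) h1t.ne',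
    log_mul (by positivity) ht₀.ne']
  congr 1
  simp only [logBinomialApprox, dkl, logb, binEntropy, log_inv,
    log_div ht₀.ne' hp₀.ne', log_div h1t.ne' (sub_pos.2 hp₁).ne']
  field_simp
  ring

lemma sq_sub_sq_le_two_mul_mul_sub_one {u w : ℝ} (hu : 1 ≤ u) (hw : 1 ≤ w) :
    w ^ 2 - u ^ 2 ≤ 2 * u * w * (w - 1) := by
  nlinarith [mul_nonneg (sub_nonneg.2 hu) (mul_nonneg (by linarith : (0:ℝ) ≤ w) (sub_nonneg.2 hw))]

section Rounding

variable {n p x x' : ℝ}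

lemma logBinomialApprox_sub :
    logBinomialApprox n p x' - logBinomialApprox n p x
      = n * (binEntropy x' - binEntropy x) + (x - x') * n * (log (1 - p) - log p)
        + (log x - log x') / 2 + (log (1 - x) - log (1 - x')) / 2 := by
  unfold logBinomialApprox; ring

lemma mul_log_add_half_log_div_nonpos (hn : 0 < n) (hx' : 1 ≤ x' * n) (hxx' : x' ≤ x)
    (hx : 1 ≤ (1 - x) * n) (hs : (x - x') * n ≤ 1) :
    (x - x') * n * log x + (log x - log x') / 2 + (log (1 - x) - log (1 - x')) / 2 ≤ 0 := by
  have hx'₀ : 0 < x' := pos_of_mul_pos_left (one_pos.trans_le hx') hn.le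
  have hx₀ : 0 < x := hx'₀.trans_le hxx'
  have h1x : 0 < 1 - x := pos_of_mul_pos_left (one_pos.trans_le hx) hn.le
  have h1x' : 0 < 1 - x' := by linarith
  have hslope : 1 / x' - 1 / (1 - x') ≤ 2 * n * (1 - x) := by
    have hw : (1 - x) * n ≤ (1 - x') * n := by gcongr
    have h := sq_sub_sq_le_two_mul_mul_sub_one hx' (hx.trans hw)
    have hn2 : 0 < n ^ 2 := by positivity
    rw [div_sub_div _ _ hx'₀.ne' h1x'.ne', div_le_iff₀ (by positivity),
      ← mul_le_mul_iff_right₀ hn2]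
    nlinarith [mul_le_mul_of_nonneg_left (by linarith : (1 - x') * n - 1 ≤ n * (1 - x))
      (by positivity : 0 ≤ 2 * (x' * n) * ((1 - x') * n))]
  have hlog := mul_le_mul_of_nonneg_left (log_le_sub_one_of_pos hx₀)
    (mul_nonneg (sub_nonneg.2 hxx') hn.le)
  have hδ := log_sub_log_le_div hx'₀ hx₀
  have hε := log_sub_log_le_div h1x' h1x
  have := mul_le_mul_of_nonneg_left hslope (sub_nonneg.2 hxx')
  have e1 : (x - x') / x' - (x - x') / (1 - x') = (x - x') * (1 / x' - 1 / (1 - x')) := by ring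
  have e2 : (1 - x - (1 - x')) / (1 - x') = - ((x - x') / (1 - x')) := by ring
  linarith

lemma lt_logBinomialApprox_sub (hn : 0 < n) (hp₀ : 0 < p)
    (hp₁ : p < 1) (hx' : 1 ≤ x' * n) (hxx' : x' ≤ x) (hx : 1 ≤ (1 - x) * n)
    (hs : (x - x') * n < 1) :
    log x + log (1 - p) - 1 < logBinomialApprox n p x' - logBinomialApprox n p x := by
  have hx'₀ : 0 < x' := pos_of_mul_pos_left (one_pos.trans_le hx') hn.le
  have hx₀ : 0 < x := hx'₀.trans_le hxx'
  have h1x : 0 < 1 - x := pos_of_mul_pos_left (one_pos.trans_le hx) hn.le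
  have h1x' : 0 < 1 - x' := by linarith
  have hs₀ : 0 ≤ (x - x') * n := mul_nonneg (sub_nonneg.2 hxx') hn.le
  set s := (x - x') * n
  have hH : s * (log x' - log (1 - x')) ≤ n * (binEntropy x' - binEntropy x) := by
    have := binEntropy_le_tangent hx'₀ (by linarith) hx₀ (by linarith)
    nlinarith
  have hδ : log x - log x' ≤ s := by
    refine (log_sub_log_le_div hx'₀ hx₀).trans ?_
    rw [div_le_iff₀ hx'₀]
    nlinarith
  have hε : log (1 - x') - log (1 - x) ≤ s := by
    refine (log_sub_log_le_div h1x h1x').trans ?_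
    rw [div_le_iff₀ h1x]
    nlinarith
  have hδ₀ : 0 ≤ log x - log x' := sub_nonneg.2 (log_le_log hx'₀ hxx')
  have hlx : log x ≤ 0 := log_nonpos hx₀.le (by linarith)
  have hlx' : log (1 - x') ≤ 0 := log_nonpos h1x'.le (by linarith)
  have hlp : log p ≤ 0 := log_nonpos hp₀.le hp₁.le
  have hlq : log (1 - p) ≤ 0 := log_nonpos (by linarith) (by linarith)
  rw [logBinomialApprox_sub]
  nlinarith [mul_nonneg (sub_nonneg.2 hs.le) (neg_nonneg.2 hlx),
    mul_nonneg (sub_nonneg.2 hs.le) hδ₀, mul_nonneg hs₀ (neg_nonneg.2 hlx'),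
    mul_nonneg hs₀ (neg_nonneg.2 hlp), mul_nonneg (sub_nonneg.2 hs.le) (neg_nonneg.2 hlq)]

lemma logBinomialApprox_sub_lt (hn : 0 < n) (hp₀ : 0 < p) (hp₁ : p < 1) (hxp : x ≤ p)
    (hx' : 1 ≤ x' * n) (hxx' : x' ≤ x) (hx : 1 ≤ (1 - x) * n) (hs : (x - x') * n < 1) :
    logBinomialApprox n p x' - logBinomialApprox n p x < -log p := by
  have hx'₀ : 0 < x' := pos_of_mul_pos_left (one_pos.trans_le hx') hn.le
  have hx₀ : 0 < x := hx'₀.trans_le hxx'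
  have h1x : 0 < 1 - x := pos_of_mul_pos_left (one_pos.trans_le hx) hn.le
  have hs₀ : 0 ≤ (x - x') * n := mul_nonneg (sub_nonneg.2 hxx') hn.le
  have hH : n * (binEntropy x' - binEntropy x) ≤ (x - x') * n * (log x - log (1 - x)) := by
    have := binEntropy_le_tangent hx₀ (by linarith) hx'₀ (by linarith)
    nlinarith
  have hq : (x - x') * n * log (1 - p) ≤ (x - x') * n * log (1 - x) :=
    mul_le_mul_of_nonneg_left (log_le_log (by linarith) (by linarith)) hs₀
  have hp : (1 - (x - x') * n) * log p < 0 :=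
    mul_neg_of_pos_of_neg (by linarith) (log_neg hp₀ hp₁)
  rw [logBinomialApprox_sub]
  linarith [mul_log_add_half_log_div_nonpos hn hx' hxx' hx hs.le]

end Rounding

/-- **Constant loss when rounding down to `x' = ⌊xn⌋/n`.** For `0 < p < 1`,
`1/n ≤ x ≤ 1-1/n`, `x ≤ p` and `C > 0`:
`(x(1-p)/e) · 2^{-Dkl(x‖p)n}/√(Cnx(1-x)) < 2^{-Dkl(x'‖p)n}/√(Cnx'(1-x'))
 < (1/p) · 2^{-Dkl(x‖p)n}/√(Cnx(1-x))`. -/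
theorem rounding_constant_loss (n : ℕ) (hn : 0 < n) (x p : ℝ)
    (hp0 : 0 < p) (hp1 : p < 1)
    (hx1 : 1 / (n : ℝ) ≤ x) (hx2 : x ≤ 1 - 1 / (n : ℝ)) (hxp : x ≤ p)
    (C : ℝ) (hC : 0 < C) (x' : ℝ) (hx' : x' * n = (⌊x * n⌋₊ : ℝ)) :
    x * (1 - p) / Real.exp 1 *
        ((2 : ℝ) ^ (-(dkl x p) * n) / Real.sqrt (C * n * x * (1 - x))) <
      (2 : ℝ) ^ (-(dkl x' p) * n) / Real.sqrt (C * n * x' * (1 - x')) ∧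
    (2 : ℝ) ^ (-(dkl x' p) * n) / Real.sqrt (C * n * x' * (1 - x')) <
      1 / p * ((2 : ℝ) ^ (-(dkl x p) * n) / Real.sqrt (C * n * x * (1 - x))) := by
  have hn₀ : (0 : ℝ) < n := by exact_mod_cast hn
  have hxn : 1 ≤ x * n := (div_le_iff₀ hn₀).1 hx1
  have h1xn : 1 ≤ (1 - x) * n := (div_le_iff₀ hn₀).1 (by linarith)
  have hx'n : 1 ≤ x' * n := by
    rw [hx']; exact_mod_cast Nat.le_floor (by exact_mod_cast hxn)
  have hxx' : x' ≤ x :=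
    le_of_mul_le_mul_right (hx' ▸ Nat.floor_le (by positivity)) hn₀
  have hs : (x - x') * n < 1 := by
    rw [sub_mul, hx']; linarith [Nat.lt_floor_add_one (x * n)]
  have hx₀ : 0 < x := pos_of_mul_pos_left (one_pos.trans_le hxn) hn₀.le
  have hx'₀ : 0 < x' := pos_of_mul_pos_left (one_pos.trans_le hx'n) hn₀.le
  have hx₁ : x < 1 := sub_pos.1 (pos_of_mul_pos_left (one_pos.trans_le h1xn) hn₀.le)
  rw [two_rpow_neg_dkl_div_sqrt hn₀ hp0 hp1 hx₀ hx₁ hC,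
    two_rpow_neg_dkl_div_sqrt hn₀ hp0 hp1 hx'₀ (hxx'.trans_lt hx₁) hC]
  have hlower : x * (1 - p) / exp 1 = exp (log x + log (1 - p) - 1) := by
    rw [exp_sub, exp_add, exp_log hx₀, exp_log (sub_pos.2 hp1)]
  have hupper : 1 / p = exp (-log p) := by rw [exp_neg, exp_log hp0, one_div]
  rw [hlower, hupper, ← exp_add, ← exp_add, exp_lt_exp, exp_lt_exp]
  constructor
  · linarith [lt_logBinomialApprox_sub hn₀ hp0 hp1 hx'n hxx' h1xn hs]
  · linarith [logBinomialApprox_sub_lt hn₀ hp0 hp1 hxp hx'n hxx' h1xn hs]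
end

section
/- Let (Ω, μ) be a probability space, let A and B be disjoint measurable subsets of Ω with μ(B) > 0, let m be a positive integer, and let μ^m be the m-fold product measure on Ω^m (m i.i.d. trials). Then μ^m({ω : ∀ j ≤ m, ω_j ∉ A, and ∃ k ≤ m, ω_k ∈ B}) / μ^m({ω : ∃ k ≤ m, ω_k ∈ B}) ≤ μ^m({ω : ∀ j ≤ m, ω_j ∉ A, and ω_m ∈ B}) / μ(B), i.e., the probability that no trial lands in A conditioned on at least one trial landing in B is at most the probability that no trial lands in A conditioned on the last trial landing in B (the latter equals (1-μ(A))^{m-1}). -/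
/-!
Write `p = μ A`, `q = μ B` and `n` for the number of trials. In the product space the event
"no trial in `A`, some trial in `B`" has probability `(1 - p) ^ n - (1 - (p + q)) ^ n`, the
event "some trial in `B`" has probability `1 - (1 - q) ^ n`, and the right-hand side equals
`(1 - p) ^ (n - 1)`. Factoring both differences of powers as geometric sums, the claim follows
termwise from `1 - (p + q) ≤ (1 - p) * (1 - q)`, i.e. from `0 ≤ p * q`.
-/

open MeasureTheory Set

theorem one_sub_pow_sub_one_sub_add_pow_le {p q : ℝ} (hp : 0 ≤ p) (hq : 0 ≤ q) (hpq : p + q ≤ 1)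
    (m : ℕ) : (1 - p) ^ m - (1 - (p + q)) ^ m ≤ (1 - p) ^ (m - 1) * (1 - (1 - q) ^ m) := by
  have hcad : 1 - (p + q) ≤ (1 - p) * (1 - q) := by nlinarith
  have hq_geom : 1 - (1 - q) ^ m = (∑ i ∈ Finset.range m, 1 ^ i * (1 - q) ^ (m - 1 - i)) * q := by
    simpa using (geom_sum₂_mul (1 : ℝ) (1 - q) m).symm
  rw [hq_geom, ← geom_sum₂_mul, ← mul_assoc, Finset.mul_sum, Finset.sum_mul, Finset.sum_mul]
  refine Finset.sum_le_sum fun i hi => ?_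
  have him : i + (m - 1 - i) = m - 1 := by have := Finset.mem_range.mp hi; omega
  have ha : 0 ≤ 1 - p := by linarith
  calc (1 - p) ^ i * (1 - (p + q)) ^ (m - 1 - i) * (1 - p - (1 - (p + q)))
      ≤ (1 - p) ^ i * ((1 - p) * (1 - q)) ^ (m - 1 - i) * q := by
        rw [show 1 - p - (1 - (p + q)) = q by ring]
        gcongr
    _ = (1 - p) ^ (m - 1) * (1 ^ i * (1 - q) ^ (m - 1 - i)) * q := by
        rw [mul_pow, ← mul_assoc, ← pow_add, him]; ring

theorem setOf_forall_mem_eq_univ_pi {ι Ω : Type*} (S : Set Ω) :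
    {ω : ι → Ω | ∀ j, ω j ∈ S} = univ.pi fun _ => S := by
  ext; simp

theorem measurableSet_setOf_forall_mem {ι Ω : Type*} [Countable ι] [MeasurableSpace Ω]
    {S : Set Ω} (hS : MeasurableSet S) : MeasurableSet {ω : ι → Ω | ∀ j, ω j ∈ S} :=
  setOf_forall_mem_eq_univ_pi S ▸ .univ_pi fun _ => hS

section IIDTrials

variable {Ω ι : Type*} [MeasurableSpace Ω] (μ : Measure Ω) [Fintype ι]

theorem measureReal_pi_forall_mem [SigmaFinite μ] (S : Set Ω) :
    (Measure.pi fun _ : ι => μ).real {ω | ∀ j, ω j ∈ S} = μ.real S ^ Fintype.card ι := by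
  rw [measureReal_def, setOf_forall_mem_eq_univ_pi, Measure.pi_pi, Finset.prod_const,
    Finset.card_univ, ENNReal.toReal_pow, measureReal_def]

theorem measure_pi_avoid_and_mem [SigmaFinite μ] {A B : Set Ω} (hAB : Disjoint A B) (i : ι) :
    Measure.pi (fun _ : ι => μ) {ω | (∀ j, ω j ∉ A) ∧ ω i ∈ B} =
      μ Aᶜ ^ (Fintype.card ι - 1) * μ B := by
  classical
  have hset : {ω : ι → Ω | (∀ j, ω j ∉ A) ∧ ω i ∈ B} =
      univ.pi (Function.update (fun _ => Aᶜ) i B) := by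
    ext ω
    simp only [mem_ofPred_eq, mem_univ_pi]
    constructor
    · rintro ⟨hA, hB⟩ j
      rcases eq_or_ne j i with rfl | hj
      · simpa using hB
      · simpa [hj] using hA j
    · intro h
      have hB : ω i ∈ B := by simpa using h i
      refine ⟨fun j => ?_, hB⟩
      rcases eq_or_ne j i with rfl | hj
      · exact hAB.notMem_of_mem_right hB
      · simpa [hj] using h j
  rw [hset, Measure.pi_pi]
  simp only [Function.apply_update (fun _ => μ)]
  rw [Finset.prod_update_of_mem (Finset.mem_univ i), Finset.prod_const,
    ← Finset.compl_eq_univ_sdiff, Finset.card_compl, Finset.card_singleton, mul_comm]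

theorem measureReal_pi_avoid_and_exists_le [IsProbabilityMeasure μ] {A B : Set Ω}
    (hA : MeasurableSet A) (hB : MeasurableSet B) (hAB : Disjoint A B) :
    (Measure.pi fun _ : ι => μ).real {ω | (∀ j, ω j ∉ A) ∧ ∃ k, ω k ∈ B} ≤
      μ.real Aᶜ ^ (Fintype.card ι - 1) * (Measure.pi fun _ : ι => μ).real {ω | ∃ k, ω k ∈ B} := by
  have hdiff : {ω : ι → Ω | (∀ j, ω j ∉ A) ∧ ∃ k, ω k ∈ B} =
      {ω | ∀ j, ω j ∈ Aᶜ} \ {ω | ∀ j, ω j ∈ (A ∪ B)ᶜ} := by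
    ext ω
    simp only [mem_ofPred_eq, mem_compl_iff, compl_union, mem_inter_iff, forall_and, mem_sdiff,
      not_and, not_forall, not_not]
    tauto
  have hcompl : {ω : ι → Ω | ∃ k, ω k ∈ B} = {ω | ∀ j, ω j ∈ Bᶜ}ᶜ := by
    ext ω; simp
  have hsub : {ω : ι → Ω | ∀ j, ω j ∈ (A ∪ B)ᶜ} ⊆ {ω | ∀ j, ω j ∈ Aᶜ} :=
    fun ω h j => compl_subset_compl.mpr subset_union_left (h j)
  have hpq : μ.real A + μ.real B ≤ 1 := measureReal_union (μ := μ) hAB hB ▸ measureReal_le_one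
  rw [hdiff, measureReal_sdiff hsub (measurableSet_setOf_forall_mem (hA.union hB).compl), hcompl,
    probReal_compl_eq_one_sub (measurableSet_setOf_forall_mem hB.compl),
    measureReal_pi_forall_mem, measureReal_pi_forall_mem, measureReal_pi_forall_mem,
    probReal_compl_eq_one_sub hA, probReal_compl_eq_one_sub hB,
    probReal_compl_eq_one_sub (hA.union hB), measureReal_union hAB hB]
  exact one_sub_pow_sub_one_sub_add_pow_le measureReal_nonneg measureReal_nonneg hpq _

end IIDTrials

/-- **Conditioning on the last trial.** For `m` i.i.d. trials with disjoint single-trial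
events `A` and `B` (with `μ(B) > 0`), the probability that no trial lands in `A`
conditioned on at least one trial landing in `B` is at most the probability that no trial
lands in `A` conditioned on the last trial landing in `B`. -/
theorem avoid_given_exists_le_avoid_given_last {Ω : Type*} [MeasurableSpace Ω]
    (μ : Measure Ω) [IsProbabilityMeasure μ] (A B : Set Ω)
    (hA : MeasurableSet A) (hB : MeasurableSet B) (hAB : Disjoint A B)
    (hBpos : 0 < μ B) (m : ℕ) (hm : 0 < m) :
    (Measure.pi fun _ : Fin m => μ) {ω | (∀ j, ω j ∉ A) ∧ ∃ k, ω k ∈ B} /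
        (Measure.pi fun _ : Fin m => μ) {ω | ∃ k, ω k ∈ B} ≤
      (Measure.pi fun _ : Fin m => μ)
          {ω | (∀ j, ω j ∉ A) ∧ ω ⟨m - 1, Nat.sub_lt hm Nat.one_pos⟩ ∈ B} / μ B := by
  rw [measure_pi_avoid_and_mem μ hAB, Fintype.card_fin,
    ENNReal.mul_div_cancel_right hBpos.ne' (measure_ne_top μ B)]
  refine ENNReal.div_le_of_le_mul ?_
  have key := measureReal_pi_avoid_and_exists_le (ι := Fin m) μ hA hB hAB
  rwa [Fintype.card_fin, measureReal_def, measureReal_def, measureReal_def, ← ENNReal.toReal_pow,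
    ← ENNReal.toReal_mul, ENNReal.toReal_le_toReal (by finiteness) (by finiteness)] at key
end

section
/- Let 0 < p < 1 be a probability, n and m positive integers, and ℓ, u integers with 0 ≤ ℓ ≤ u ≤ n. Let 𝐩 = max_{ℓ ≤ i ≤ u} p^i·(1-p)^{n-i} (explicitly, 𝐩 = p^ℓ·(1-p)^{n-ℓ} if p < 1/2, 𝐩 = 1/2^n if p = 1/2, and 𝐩 = p^u·(1-p)^{n-u} if p > 1/2). Then the expected number of distinct sampled sets of cardinality between ℓ and u, which equals Σ_{i=ℓ}^{u} C(n,i)·(1 - (1 - p^i·(1-p)^{n-i})^m), satisfies (m/(1 + m·𝐩)) · Σ_{i=ℓ}^{u} C(n,i)·p^i·(1-p)^{n-i} ≤ Σ_{i=ℓ}^{u} C(n,i)·(1 - (1 - p^i·(1-p)^{n-i})^m) ≤ m · Σ_{i=ℓ}^{u} C(n,i)·p^i·(1-p)^{n-i}. -/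
/-!
Write `q i = p^i (1-p)^(n-i)` and compare the sums term by term. The upper bound is Bernoulli's
inequality `(1 - q)^m ≥ 1 - m q`. For the lower bound, Bernoulli applied to `(1 + q)^m` gives
`(1 - q)^m (1 + m q) ≤ (1 - q^2)^m ≤ 1`, hence `1 - (1 - q)^m ≥ m q / (1 + m q) ≥ m q / (1 + m 𝐩)`.
Since `q (i + 1) / q i = p / (1 - p)`, the weight `q i` decreases in `i` for `p ≤ 1/2` and
increases for `p ≥ 1/2`, so its maximum over `[ℓ, u]` sits at an endpoint.
-/

section Bernoulli

variable {R : Type*} [CommRing R] [LinearOrder R] [IsStrictOrderedRing R]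

theorem one_sub_one_sub_pow_le_mul {q : R} (hq : q ≤ 2) (m : ℕ) :
    1 - (1 - q) ^ m ≤ m * q := by
  have := one_add_mul_le_pow (neg_le_neg hq) m
  rw [← sub_eq_add_neg, mul_neg, ← sub_eq_add_neg] at this
  linarith

theorem one_sub_pow_mul_one_add_mul_le_one {q : R} (hq0 : 0 ≤ q) (hq1 : q ≤ 1) (m : ℕ) :
    (1 - q) ^ m * (1 + m * q) ≤ 1 :=
  calc (1 - q) ^ m * (1 + m * q)
      ≤ (1 - q) ^ m * (1 + q) ^ m :=
        mul_le_mul_of_nonneg_left (one_add_mul_le_pow (by linarith) m)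
          (pow_nonneg (sub_nonneg.2 hq1) m)
    _ = (1 - q ^ 2) ^ m := by rw [← mul_pow]; ring
    _ ≤ 1 := pow_le_one₀ (by nlinarith) (by nlinarith)

end Bernoulli

theorem div_one_add_mul_mul_le_one_sub_one_sub_pow {K : Type*} [Field K] [LinearOrder K]
    [IsStrictOrderedRing K] {q P : K} (hq0 : 0 ≤ q) (hq1 : q ≤ 1) (hqP : q ≤ P) (m : ℕ) :
    m / (1 + m * P) * q ≤ 1 - (1 - q) ^ m := by
  have hm : (0 : K) ≤ m := m.cast_nonneg
  have hpos : 0 < 1 + m * P := by nlinarith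
  have hpow : (1 - q) ^ m ≤ 1 := pow_le_one₀ (by linarith) (by linarith)
  rw [div_mul_eq_mul_div, div_le_iff₀ hpos]
  calc m * q ≤ (1 - (1 - q) ^ m) * (1 + m * q) := by
        nlinarith [one_sub_pow_mul_one_add_mul_le_one hq0 hq1 m]
    _ ≤ (1 - (1 - q) ^ m) * (1 + m * P) := by gcongr

theorem pow_mul_pow_sub_le_pow_mul_pow_sub {R : Type*} [CommSemiring R] [PartialOrder R]
    [IsOrderedRing R] {a b : R} (ha : 0 ≤ a) (hab : a ≤ b) {i j n : ℕ} (hij : i ≤ j)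
    (hjn : j ≤ n) : a ^ j * b ^ (n - j) ≤ a ^ i * b ^ (n - i) := by
  obtain ⟨k, rfl⟩ := Nat.exists_eq_add_of_le hij
  obtain ⟨r, rfl⟩ := Nat.exists_eq_add_of_le hjn
  have hn : i + k + r - i = k + r := by omega
  rw [hn, Nat.add_sub_cancel_left, pow_add, pow_add, mul_assoc]
  exact mul_le_mul_of_nonneg_left
    (mul_le_mul_of_nonneg_right (pow_le_pow_left₀ ha hab k) (pow_nonneg (ha.trans hab) r))
    (pow_nonneg ha i)

theorem pow_mul_one_sub_pow_sub_le_max_endpoint {p : ℝ} (hp0 : 0 ≤ p) (hp1 : p ≤ 1)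
    {n l u i : ℕ} (hli : l ≤ i) (hiu : i ≤ u) (hun : u ≤ n) :
    p ^ i * (1 - p) ^ (n - i) ≤
      if p < 1 / 2 then p ^ l * (1 - p) ^ (n - l)
      else if p = 1 / 2 then 1 / 2 ^ n
      else p ^ u * (1 - p) ^ (n - u) := by
  split_ifs with hlt heq
  · exact pow_mul_pow_sub_le_pow_mul_pow_sub hp0 (by linarith) hli (hiu.trans hun)
  · rw [heq, ← one_div_pow, show (1 : ℝ) - 1 / 2 = 1 / 2 by norm_num,
      ← pow_add, Nat.add_sub_cancel' (hiu.trans hun)]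
  · have key := pow_mul_pow_sub_le_pow_mul_pow_sub (sub_nonneg.2 hp1) (by linarith)
      (Nat.sub_le_sub_left hiu n) (Nat.sub_le n i)
    rwa [Nat.sub_sub_self hun, Nat.sub_sub_self (hiu.trans hun), mul_comm,
      mul_comm ((1 - p) ^ (n - u))] at key

theorem distinct_sets_bounds_general (p : ℝ) (hp0 : 0 < p) (hp1 : p < 1)
    (n m : ℕ) (l u : ℕ) (hun : u ≤ n)
    (P : ℝ)
    (hP : P = if p < 1 / 2 then p ^ l * (1 - p) ^ (n - l)
          else if p = 1 / 2 then 1 / 2 ^ n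
          else p ^ u * (1 - p) ^ (n - u)) :
    (∀ i ∈ Finset.Icc l u, p ^ i * (1 - p) ^ (n - i) ≤ P) ∧
    (m : ℝ) / (1 + m * P) *
        ∑ i ∈ Finset.Icc l u, (n.choose i : ℝ) * p ^ i * (1 - p) ^ (n - i) ≤
      ∑ i ∈ Finset.Icc l u, (n.choose i : ℝ) * (1 - (1 - p ^ i * (1 - p) ^ (n - i)) ^ m) ∧
    ∑ i ∈ Finset.Icc l u, (n.choose i : ℝ) * (1 - (1 - p ^ i * (1 - p) ^ (n - i)) ^ m) ≤
      (m : ℝ) * ∑ i ∈ Finset.Icc l u, (n.choose i : ℝ) * p ^ i * (1 - p) ^ (n - i) := by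
  have h1p : 0 ≤ 1 - p := by linarith
  have hq0 (i : ℕ) : 0 ≤ p ^ i * (1 - p) ^ (n - i) := by positivity
  have hq1 (i : ℕ) : p ^ i * (1 - p) ^ (n - i) ≤ 1 :=
    mul_le_one₀ (pow_le_one₀ hp0.le hp1.le) (pow_nonneg h1p _) (pow_le_one₀ h1p (by linarith))
  have hqP : ∀ i ∈ Finset.Icc l u, p ^ i * (1 - p) ^ (n - i) ≤ P := fun i hi =>
    hP ▸ pow_mul_one_sub_pow_sub_le_max_endpoint hp0.le hp1.le (Finset.mem_Icc.1 hi).1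
      (Finset.mem_Icc.1 hi).2 hun
  refine ⟨hqP, ?_, ?_⟩ <;> rw [Finset.mul_sum] <;> refine Finset.sum_le_sum fun i hi => ?_ <;>
    rw [mul_assoc _ (p ^ i), mul_left_comm] <;> gcongr
  · exact div_one_add_mul_mul_le_one_sub_one_sub_pow (hq0 i) (hq1 i) (hqP i hi) m
  · exact one_sub_one_sub_pow_le_mul (by linarith [hq1 i]) m

/-- **Expected number of distinct sampled sets with cardinality between `ℓ` and `u`.**
With `𝐩 = max_{ℓ ≤ i ≤ u} p^i(1-p)^{n-i}` (given explicitly by cases on `p` vs `1/2`),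
the expected number of distinct sets, `Σ_{i=ℓ}^u C(n,i)(1-(1-p^i(1-p)^{n-i})^m)`, is
between `m/(1+m𝐩)` times and `m` times `Σ_{i=ℓ}^u C(n,i)p^i(1-p)^{n-i} = P[ℓ ≤ Y ≤ u]`. -/
theorem distinct_sets_bounds (p : ℝ) (hp0 : 0 < p) (hp1 : p < 1)
    (n m : ℕ) (hn : 0 < n) (hm : 0 < m) (l u : ℕ) (hlu : l ≤ u) (hun : u ≤ n)
    (P : ℝ)
    (hP : P = if p < 1 / 2 then p ^ l * (1 - p) ^ (n - l)
          else if p = 1 / 2 then 1 / 2 ^ n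
          else p ^ u * (1 - p) ^ (n - u)) :
    (∀ i ∈ Finset.Icc l u, p ^ i * (1 - p) ^ (n - i) ≤ P) ∧
    (m : ℝ) / (1 + m * P) *
        ∑ i ∈ Finset.Icc l u, (n.choose i : ℝ) * p ^ i * (1 - p) ^ (n - i) ≤
      ∑ i ∈ Finset.Icc l u, (n.choose i : ℝ) * (1 - (1 - p ^ i * (1 - p) ^ (n - i)) ^ m) ∧
    ∑ i ∈ Finset.Icc l u, (n.choose i : ℝ) * (1 - (1 - p ^ i * (1 - p) ^ (n - i)) ^ m) ≤
      (m : ℝ) * ∑ i ∈ Finset.Icc l u, (n.choose i : ℝ) * p ^ i * (1 - p) ^ (n - i) :=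
  distinct_sets_bounds_general p hp0 hp1 n m l u hun P hP
end
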